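/- Let G and H be finite simple connected non-complete graphs. Then the weakly toll number of the lexicographic product satisfies wtn(G[H]) ≤ 3. -/

import Mathlib

open SimpleGraph

/-- A walk `w : u → v` is a *weakly toll walk* if every vertex of the walk adjacent to `u`
equals the second vertex of the walk, and every vertex of the walk adjacent to `v` equals the
second-to-last vertex of the walk. -/
def IsWeaklyTollWalk {V : Type*} (G : SimpleGraph V) {u v : V} (w : G.Walk u v) : Prop :=
  (∀ i ≤ w.length, G.Adj u (w.getVert i) → w.getVert i = w.getVert 1) ∧
  (∀ i ≤ w.length, G.Adj (w.getVert i) v → w.getVert i = w.getVert (w.length - 1))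

/-- The weakly toll interval `WT_G(u,v)`: all vertices lying on some weakly toll walk
between `u` and `v`. -/
def wtInterval {V : Type*} (G : SimpleGraph V) (u v : V) : Set V :=
  {x | ∃ w : G.Walk u v, IsWeaklyTollWalk G w ∧ x ∈ w.support}

/-- `WT(S)`: the union of the weakly toll intervals between pairs of vertices of `S`. -/
def wtClosure {V : Type*} (G : SimpleGraph V) (S : Set V) : Set V :=
  ⋃ u ∈ S, ⋃ v ∈ S, wtInterval G u v

/-- `S` is a weakly toll set if the weakly toll intervals between its members cover `V(G)`. -/
def IsWeaklyTollSet {V : Type*} (G : SimpleGraph V) (S : Set V) : Prop :=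
  wtClosure G S = Set.univ

/-- The weakly toll number: the minimum cardinality of a weakly toll set. -/
noncomputable def wtn {V : Type*} (G : SimpleGraph V) : ℕ :=
  sInf {n | ∃ S : Set V, IsWeaklyTollSet G S ∧ S.ncard = n}

/-- The weakly toll convex hull of `S`: the union of the iterates `WT^k(S)`. -/
def wtHull {V : Type*} (G : SimpleGraph V) (S : Set V) : Set V :=
  ⋃ k : ℕ, (wtClosure G)^[k] S

/-- `S` is a weakly toll hull set if its weakly toll convex hull is all of `V(G)`. -/
def IsWeaklyTollHullSet {V : Type*} (G : SimpleGraph V) (S : Set V) : Prop :=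
  wtHull G S = Set.univ

/-- The weakly toll hull number: the minimum cardinality of a weakly toll hull set. -/
noncomputable def wth {V : Type*} (G : SimpleGraph V) : ℕ :=
  sInf {n | ∃ S : Set V, IsWeaklyTollHullSet G S ∧ S.ncard = n}

/-- A walk `w : u → v` is a *semi weakly toll walk* if every vertex of the walk adjacent to `u`
equals the second vertex of the walk (no condition at `v`). -/
def IsSemiWeaklyTollWalk {V : Type*} (G : SimpleGraph V) {u v : V} (w : G.Walk u v) : Prop :=
  ∀ i ≤ w.length, G.Adj u (w.getVert i) → w.getVert i = w.getVert 1

/-- The semi weakly toll interval `SWT_G(u,v)`. -/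
def swtInterval {V : Type*} (G : SimpleGraph V) (u v : V) : Set V :=
  {x | ∃ w : G.Walk u v, IsSemiWeaklyTollWalk G w ∧ x ∈ w.support}

/-- The strong product of two simple graphs. -/
def strongProd {V W : Type*} (G : SimpleGraph V) (H : SimpleGraph W) :
    SimpleGraph (V × W) where
  Adj p q := (G.Adj p.1 q.1 ∧ p.2 = q.2) ∨ (p.1 = q.1 ∧ H.Adj p.2 q.2) ∨
    (G.Adj p.1 q.1 ∧ H.Adj p.2 q.2)
  symm := by
    constructor
    rintro p q (⟨h1, h2⟩ | ⟨h1, h2⟩ | ⟨h1, h2⟩)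
    · exact Or.inl ⟨h1.symm, h2.symm⟩
    · exact Or.inr (Or.inl ⟨h1.symm, h2.symm⟩)
    · exact Or.inr (Or.inr ⟨h1.symm, h2.symm⟩)
  loopless := by
    constructor
    rintro p (⟨h, -⟩ | ⟨-, h⟩ | ⟨h, -⟩)
    · exact G.loopless.irrefl _ h
    · exact H.loopless.irrefl _ h
    · exact G.loopless.irrefl _ h

/-- The lexicographic product of two simple graphs. -/
def lexProd {V W : Type*} (G : SimpleGraph V) (H : SimpleGraph W) :
    SimpleGraph (V × W) where
  Adj p q := G.Adj p.1 q.1 ∨ (p.1 = q.1 ∧ H.Adj p.2 q.2)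
  symm := by
    constructor
    rintro p q (h | ⟨h1, h2⟩)
    · exact Or.inl h.symm
    · exact Or.inr ⟨h1.symm, h2.symm⟩
  loopless := by
    constructor
    rintro p (h | ⟨-, h⟩)
    · exact G.loopless.irrefl _ h
    · exact H.loopless.irrefl _ h

/-- The adjacency relation of the corona product `G ∘ H`. -/
def coronaAdj {V W : Type*} (G : SimpleGraph V) (H : SimpleGraph W) :
    V ⊕ V × W → V ⊕ V × W → Prop
  | Sum.inl g, Sum.inl g' => G.Adj g g'
  | Sum.inl g, Sum.inr p => g = p.1
  | Sum.inr p, Sum.inl g => p.1 = g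
  | Sum.inr p, Sum.inr q => p.1 = q.1 ∧ H.Adj p.2 q.2

/-- The corona product `G ∘ H`: one copy of `G` and a copy of `H` for each vertex `g` of `G`,
with `g` joined to every vertex of its copy of `H`. -/
def corona {V W : Type*} (G : SimpleGraph V) (H : SimpleGraph W) :
    SimpleGraph (V ⊕ V × W) where
  Adj := coronaAdj G H
  symm := by
    constructor
    rintro (g | p) (g' | q) h <;> simp only [coronaAdj] at h ⊢
    · exact h.symm
    · exact h.symm
    · exact h.symm
    · exact ⟨h.1.symm, h.2.symm⟩
  loopless := by
    constructor
    rintro (g | p) h <;> simp only [coronaAdj] at h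
    · exact G.loopless.irrefl _ h
    · exact H.loopless.irrefl _ h.2


section WTAux

open SimpleGraph

variable {V W : Type*}

private lemma wt_exists_not_adj {G : SimpleGraph V} (h : G ≠ ⊤) :
    ∃ a b : V, a ≠ b ∧ ¬ G.Adj a b := by
  by_contra hcon
  push_neg at hcon
  apply h
  ext a b
  simp only [top_adj]
  exact ⟨fun hab => hab.ne, fun hab => hcon a b hab⟩

private lemma wt_exists_adj {G : SimpleGraph V} (hc : G.Connected) {a b : V} (hab : a ≠ b) :
    ∃ c, G.Adj a c := by
  obtain ⟨w⟩ := hc a b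
  cases w with
  | nil => exact absurd rfl hab
  | cons h _ => exact ⟨_, h⟩

private lemma wt_dist_getVert_left {G : SimpleGraph V} (hc : G.Connected) {s t : V}
    (q : G.Walk s t) (i : ℕ) : G.dist s (q.getVert i) ≤ i := by
  induction q generalizing i with
  | nil => rw [Walk.getVert_of_length_le _ (Nat.zero_le i)]; simp [SimpleGraph.dist_self]
  | @cons a c b hadj q ih =>
    cases i with
    | zero => simp [SimpleGraph.dist_self]
    | succ n =>
      rw [Walk.getVert_cons_succ]
      refine le_trans (hc.dist_triangle (v := c)) ?_
      have h1 : G.dist a c ≤ 1 := by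
        simpa using SimpleGraph.dist_le (Walk.cons hadj Walk.nil)
      have h2 := ih n
      omega

private lemma wt_dist_getVert_right {G : SimpleGraph V} {s t : V}
    (q : G.Walk s t) (i : ℕ) : G.dist (q.getVert i) t ≤ q.length - i := by
  induction q generalizing i with
  | nil => rw [Walk.getVert_of_length_le _ (Nat.zero_le i)]; simp [SimpleGraph.dist_self]
  | @cons a c b hadj q ih =>
    cases i with
    | zero =>
      rw [Walk.getVert_zero]
      simpa using SimpleGraph.dist_le (Walk.cons hadj q)
    | succ n =>
      rw [Walk.getVert_cons_succ, Walk.length_cons]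
      have := ih n
      omega

private lemma wt_pos {G : SimpleGraph V} (hc : G.Connected) {s t : V} (q : G.Walk s t)
    (hq : q.length = G.dist s t) {i : ℕ} (hi : i ≤ q.length) :
    G.dist s (q.getVert i) = i ∧ G.dist (q.getVert i) t = q.length - i := by
  have h1 := wt_dist_getVert_left hc q i
  have h2 := wt_dist_getVert_right q i
  have h3 := hc.dist_triangle (u := s) (v := q.getVert i) (w := t)
  omega

private lemma wt_interior {G : SimpleGraph V} (hc : G.Connected) {g1 g2 : V}
    (hne : g1 ≠ g2) (hnadj : ¬ G.Adj g1 g2) :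
    ∃ (a b : V) (r : G.Walk a b), G.Adj g1 a ∧ G.Adj b g2 ∧
      ∀ x ∈ r.support, (G.Adj g1 x → x = a) ∧ (G.Adj x g2 → x = b) ∧ x ≠ g2 := by
  obtain ⟨q, hq⟩ := (hc g1 g2).exists_walk_length_eq_dist
  have hm : 2 ≤ q.length := by
    have h0 : q.length ≠ 0 := fun h0 => hne (Walk.eq_of_length_eq_zero h0)
    have h1 : q.length ≠ 1 := by
      intro h1
      exact hnadj (SimpleGraph.dist_eq_one_iff_adj.mp (by rw [← hq]; exact h1))
    omega
  have hnil : ¬ q.Nil := Walk.not_nil_iff_lt_length.mpr (by omega)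
  have hlen1 : q.tail.length = q.length - 1 := by
    have := Walk.length_tail_add_one hnil; omega
  set q2 := q.tail.reverse with hq2
  have hlen2 : q2.length = q.length - 1 := by rw [hq2, Walk.length_reverse, hlen1]
  have hnil2 : ¬ q2.Nil := Walk.not_nil_iff_lt_length.mpr (by omega)
  have hlen3 : q2.tail.length = q.length - 2 := by
    have := Walk.length_tail_add_one hnil2; omega
  set r := q2.tail.reverse with hrdef
  have hrlen : r.length = q.length - 2 := by rw [hrdef, Walk.length_reverse, hlen3]
  have hbval : q2.getVert 1 = q.getVert (q.length - 1) := by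
    rw [hq2, Walk.getVert_reverse, hlen1, Walk.getVert_tail _]
    congr 1
    omega
  have hget : ∀ i ≤ q.length - 2, r.getVert i = q.getVert (i + 1) := by
    intro i hi
    rw [hrdef, Walk.getVert_reverse, hlen3, Walk.getVert_tail _, hq2,
      Walk.getVert_reverse, hlen1, Walk.getVert_tail _]
    congr 1
    omega
  have hadja : G.Adj g1 (q.getVert 1) := by
    have := q.adj_getVert_succ (i := 0) (by omega)
    simpa using this
  have hadjb : G.Adj (q2.getVert 1) g2 := by
    have h := q.adj_getVert_succ (i := q.length - 1) (by omega)
    have h2 : q.length - 1 + 1 = q.length := by omega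
    rw [h2, Walk.getVert_length] at h
    rw [hbval]
    exact h
  refine ⟨q.getVert 1, q2.getVert 1, r, hadja, hadjb, ?_⟩
  intro x hx
  obtain ⟨i, hxi, hil⟩ := Walk.mem_support_iff_exists_getVert.mp hx
  rw [hrlen] at hil
  have hxval : x = q.getVert (i + 1) := by rw [← hget i hil, hxi]
  obtain ⟨hd1, hd2⟩ := wt_pos hc q hq (i := i + 1) (by omega)
  rw [← hxval] at hd1 hd2
  refine ⟨?_, ?_, ?_⟩
  · intro hadj
    have hone : G.dist g1 x = 1 := SimpleGraph.dist_eq_one_iff_adj.mpr hadj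
    rw [hxval]
    congr 1
    omega
  · intro hadj
    have hone : G.dist x g2 = 1 := SimpleGraph.dist_eq_one_iff_adj.mpr hadj
    rw [hxval, hbval]
    congr 1
    omega
  · intro hgg
    rw [hgg, SimpleGraph.dist_self] at hd2
    omega

private def liftG (G : SimpleGraph V) (H : SimpleGraph W) (w : W) :
    {s r : V} → G.Walk s r → (lexProd G H).Walk (s, w) (r, w)
  | _, _, Walk.nil => Walk.nil
  | _, _, Walk.cons h p => Walk.cons (Or.inl h) (liftG G H w p)

private lemma support_liftG (G : SimpleGraph V) (H : SimpleGraph W) (w : W) :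
    ∀ {s r : V} (p : G.Walk s r),
      (liftG G H w p).support = p.support.map (fun z => (z, w))
  | _, _, Walk.nil => rfl
  | _, _, Walk.cons h p => by
      show (Walk.cons (show (lexProd G H).Adj (_, w) (_, w) from Or.inl h) (liftG G H w p)).support = _
      rw [Walk.support_cons, support_liftG G H w p, Walk.support_cons, List.map_cons]

private def liftH (G : SimpleGraph V) (H : SimpleGraph W) (c : V) :
    {s r : W} → H.Walk s r → (lexProd G H).Walk (c, s) (c, r)
  | _, _, Walk.nil => Walk.nil
  | _, _, @Walk.cons _ _ s v r h p =>
      Walk.cons (show (lexProd G H).Adj (c, s) (c, v) from Or.inr ⟨rfl, h⟩) (liftH G H c p)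

private lemma support_liftH (G : SimpleGraph V) (H : SimpleGraph W) (c : V) :
    ∀ {s r : W} (p : H.Walk s r),
      (liftH G H c p).support = p.support.map (fun z => (c, z))
  | _, _, Walk.nil => rfl
  | _, _, Walk.cons h p => by
      show (Walk.cons _ (liftH G H c p)).support = _
      rw [Walk.support_cons, support_liftH G H c p, Walk.support_cons, List.map_cons]

private lemma wt_key {U : Type*} (L : SimpleGraph U) {u v a b : U}
    (hne : ¬ L.Adj u v) (hua : L.Adj u a) (hbv : L.Adj b v)
    (p : L.Walk a b) (hp : ∀ x ∈ p.support, (L.Adj u x → x = a) ∧ (L.Adj x v → x = b)) :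
    ∀ x ∈ p.support, x ∈ wtInterval L u v := by
  intro x hx
  set q : L.Walk u v := Walk.cons hua (p.concat hbv) with hqdef
  have hsupp : q.support = u :: (p.support ++ [v]) := by
    rw [hqdef, Walk.support_cons, Walk.support_concat]
  have hlen : q.length = p.length + 2 := by
    rw [hqdef, Walk.length_cons, Walk.length_concat]
  have hget1 : q.getVert 1 = a := by
    rw [hqdef]
    have : (Walk.cons hua (p.concat hbv)).getVert 1 = (p.concat hbv).getVert 0 := rfl
    rw [this, Walk.getVert_zero]
  have hgetl : q.getVert (q.length - 1) = b := by
    rw [hlen]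
    have h2 : p.length + 2 - 1 = p.length + 1 := by omega
    rw [h2, hqdef, Walk.getVert_cons_succ, Walk.concat_eq_append, Walk.getVert_append]
    simp
  have hmemq : ∀ i, q.getVert i ∈ q.support := by
    intro i
    rcases le_or_gt i q.length with h | h
    · exact Walk.mem_support_iff_exists_getVert.mpr ⟨i, rfl, h⟩
    · rw [Walk.getVert_of_length_le _ (le_of_lt h)]; exact q.end_mem_support
  have hwt : IsWeaklyTollWalk L q := by
    constructor
    · intro i _ hadj
      have hm := hmemq i
      rw [hsupp] at hm
      rw [hget1]
      rcases List.mem_cons.mp hm with h | h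
      · rw [h] at hadj; exact absurd hadj (L.loopless.irrefl u)
      · rcases List.mem_append.mp h with h | h
        · exact (hp _ h).1 hadj
        · rw [List.mem_singleton.mp h] at hadj; exact absurd hadj hne
    · intro i _ hadj
      have hm := hmemq i
      rw [hsupp] at hm
      rw [hgetl]
      rcases List.mem_cons.mp hm with h | h
      · rw [h] at hadj; exact absurd hadj hne
      · rcases List.mem_append.mp h with h | h
        · exact (hp _ h).2 hadj
        · rw [List.mem_singleton.mp h] at hadj; exact absurd hadj (L.loopless.irrefl v)
  exact ⟨q, hwt, by rw [hsupp]; exact List.mem_cons_of_mem _ (List.mem_append_left _ hx)⟩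

private lemma wt_case2 {U : Type*} {L : SimpleGraph U} {u v x : U} (hne : ¬ L.Adj u v)
    (hux : L.Adj u x) (hxv : L.Adj x v) : x ∈ wtInterval L u v := by
  refine wt_key L hne hux hxv Walk.nil ?_ x ?_
  · intro z hz
    simp only [Walk.support_nil, List.mem_singleton] at hz
    subst hz
    exact ⟨fun _ => rfl, fun _ => rfl⟩
  · simp [Walk.support_nil]

private lemma wt_caseB {G : SimpleGraph V} {H : SimpleGraph W}
    (hGc : G.Connected) {g1 g2 : V} (hg12 : g1 ≠ g2) (hgadj : ¬ G.Adj g1 g2)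
    (h0 h1 w : W) (hw : ¬ H.Adj h0 w) :
    (g1, w) ∈ wtInterval (lexProd G H) (g1, h0) (g2, h1) := by
  obtain ⟨a, b, r, ha, hb, hr⟩ := wt_interior hGc hg12 hgadj
  have hadj1 : (lexProd G H).Adj (a, w) (g1, w) := Or.inl ha.symm
  have hadj2 : (lexProd G H).Adj (g1, w) (a, w) := Or.inl ha
  have hne : ¬ (lexProd G H).Adj (g1, h0) (g2, h1) := by
    rintro (h | ⟨h, -⟩)
    · exact hgadj h
    · exact hg12 h
  have hgen : ∀ y ∈ r.support,
      ((lexProd G H).Adj (g1, h0) (y, w) → (y, w) = ((a, w) : V × W)) ∧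
      ((lexProd G H).Adj (y, w) (g2, h1) → (y, w) = ((b, w) : V × W)) := by
    intro y hy
    constructor
    · rintro (h | ⟨h, h'⟩)
      · rw [(hr y hy).1 h]
      · exact absurd h' hw
    · rintro (h | ⟨h, h'⟩)
      · rw [(hr y hy).2.1 h]
      · exact absurd h (hr y hy).2.2
  refine wt_key (lexProd G H) hne (Or.inl ha) (Or.inl hb)
    (Walk.cons hadj1 (Walk.cons hadj2 (liftG G H w r))) ?_ (g1, w) ?_
  · intro z hz
    simp only [Walk.support_cons, List.mem_cons, support_liftG, List.mem_map] at hz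
    rcases hz with rfl | rfl | ⟨y, hy, rfl⟩
    · exact hgen a r.start_mem_support
    · constructor
      · rintro (h | ⟨-, h'⟩)
        · exact absurd h (G.loopless.irrefl g1)
        · exact absurd h' hw
      · rintro (h | ⟨h, -⟩)
        · exact absurd h hgadj
        · exact absurd h hg12
    · exact hgen y hy
  · simp [Walk.support_cons]

private lemma wt_caseC {G : SimpleGraph V} {H : SimpleGraph W}
    (hGc : G.Connected) (hHc : H.Connected) {g1 c : V} (hg1c : g1 ≠ c)
    (hgadj : ¬ G.Adj g1 c) (h1 h2 w : W) (hH12 : ¬ H.Adj h1 h2) :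
    (c, w) ∈ wtInterval (lexProd G H) (g1, h1) (g1, h2) := by
  obtain ⟨a, b, r, ha, hb, hr⟩ := wt_interior hGc hg1c hgadj
  obtain ⟨s⟩ := hHc h1 w
  have hadjbc : (lexProd G H).Adj (b, h1) (c, h1) := Or.inl hb
  have hadjcb : (lexProd G H).Adj (c, h1) (b, h1) := Or.inl hb.symm
  have hne : ¬ (lexProd G H).Adj (g1, h1) (g1, h2) := by
    rintro (h | ⟨-, h'⟩)
    · exact G.loopless.irrefl _ h
    · exact hH12 h'
  set p : (lexProd G H).Walk (a, h1) (a, h1) :=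
    (liftG G H h1 r).append (Walk.cons hadjbc ((liftH G H c s).append
      ((liftH G H c s).reverse.append (Walk.cons hadjcb (liftG G H h1 r).reverse)))) with hpdef
  have hxmem : (c, w) ∈ p.support := by
    rw [hpdef, Walk.mem_support_append_iff]
    right
    rw [Walk.support_cons]
    apply List.mem_cons_of_mem
    rw [Walk.mem_support_append_iff]
    left
    rw [support_liftH]
    exact List.mem_map_of_mem s.end_mem_support
  refine wt_key (lexProd G H) hne (Or.inl ha) (Or.inl ha.symm) p ?_ (c, w) hxmem
  intro z hz
  have hcase : (∃ y ∈ r.support, z = (y, h1)) ∨ (∃ y ∈ s.support, z = (c, y)) := by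
    rw [hpdef] at hz
    simp only [Walk.mem_support_append_iff, Walk.support_cons, List.mem_cons,
      Walk.support_reverse, List.mem_reverse, support_liftG, support_liftH,
      List.mem_map] at hz
    rcases hz with ⟨y, hy, rfl⟩ | hz
    · exact Or.inl ⟨y, hy, rfl⟩
    rcases hz with rfl | hz
    · exact Or.inl ⟨b, r.end_mem_support, rfl⟩
    rcases hz with ⟨y, hy, rfl⟩ | hz
    · exact Or.inr ⟨y, hy, rfl⟩
    rcases hz with ⟨y, hy, rfl⟩ | hz
    · exact Or.inr ⟨y, hy, rfl⟩
    rcases hz with rfl | ⟨y, hy, rfl⟩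
    · exact Or.inr ⟨h1, s.start_mem_support, rfl⟩
    · exact Or.inl ⟨y, hy, rfl⟩
  rcases hcase with ⟨y, hy, rfl⟩ | ⟨y, hy, rfl⟩
  · constructor
    · rintro (h | ⟨-, h'⟩)
      · rw [(hr y hy).1 h]
      · exact absurd h' (H.loopless.irrefl h1)
    · rintro (h | ⟨-, h'⟩)
      · rw [(hr y hy).1 h.symm]
      · exact absurd h' hH12
  · constructor
    · rintro (h | ⟨h, -⟩)
      · exact absurd h hgadj
      · exact absurd h hg1c
    · rintro (h | ⟨h, -⟩)
      · exact absurd h.symm hgadj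
      · exact absurd h.symm hg1c

end WTAux

/-- For finite connected non-complete graphs `G`, `H`, the weakly toll number
of the lexicographic product satisfies `wtn(G[H]) ≤ 3`. -/
theorem wtn_lexProd_le_three {V W : Type*} [Fintype V] [Fintype W]
    (G : SimpleGraph V) (H : SimpleGraph W)
    (hGc : G.Connected) (hHc : H.Connected)
    (hGnc : G ≠ ⊤) (hHnc : H ≠ ⊤) :
    wtn (lexProd G H) ≤ 3 := by
  classical
  obtain ⟨g1, g2, hg12, hgadj⟩ := wt_exists_not_adj hGnc
  obtain ⟨h1, h2, hh12, hhadj⟩ := wt_exists_not_adj hHnc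
  set S : Set (V × W) := {(g1, h1), (g1, h2), (g2, h1)} with hSdef
  have hneuv : ¬ (lexProd G H).Adj (g1, h1) (g1, h2) := by
    rintro (h | ⟨-, h'⟩)
    · exact G.loopless.irrefl _ h
    · exact hhadj h'
  have hS : IsWeaklyTollSet (lexProd G H) S := by
    rw [IsWeaklyTollSet, Set.eq_univ_iff_forall]
    rintro ⟨c, w⟩
    have hmem : ∀ p ∈ S, ∀ q ∈ S,
        (c, w) ∈ wtInterval (lexProd G H) p q →
        (c, w) ∈ wtClosure (lexProd G H) S := by
      intro p hp q hq h
      exact Set.mem_biUnion hp (Set.mem_biUnion hq h)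
    by_cases hc1 : G.Adj g1 c
    · exact hmem _ (by simp [hSdef]) _ (by simp [hSdef])
        (wt_case2 hneuv (Or.inl hc1) (Or.inl hc1.symm))
    by_cases hc0 : c = g1
    · subst hc0
      by_cases hw1 : H.Adj h1 w
      · by_cases hw2 : H.Adj h2 w
        · exact hmem _ (by simp [hSdef]) _ (by simp [hSdef])
            (wt_case2 hneuv (Or.inr ⟨rfl, hw1⟩) (Or.inr ⟨rfl, hw2.symm⟩))
        · exact hmem _ (by simp [hSdef]) _ (by simp [hSdef])
            (wt_caseB hGc hg12 hgadj h2 h1 w hw2)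
      · exact hmem _ (by simp [hSdef]) _ (by simp [hSdef])
          (wt_caseB hGc hg12 hgadj h1 h1 w hw1)
    · exact hmem _ (by simp [hSdef]) _ (by simp [hSdef])
        (wt_caseC hGc hHc (fun h => hc0 h.symm) hc1 h1 h2 w hhadj)
  have hcard : S.ncard = 3 := by
    rw [hSdef, Set.ncard_eq_three]
    refine ⟨(g1, h1), (g1, h2), (g2, h1), ?_, ?_, ?_, rfl⟩
    · simp [Prod.ext_iff, hh12]
    · simp [Prod.ext_iff, hg12]
    · simp [Prod.ext_iff, hg12]
  unfold wtn
  exact Nat.sInf_le ⟨S, hS, hcard⟩
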